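/- arXiv:2104.12364 — 4 statements merged into one kernel-verified Lean document; each statement's English description precedes it below -/
import Mathlib

section
/- (Energy balance, Lemma 4.1.) Suppose x : [0,1] → ℂⁿ is such that w := H·x (that is, w(ζ) = H(ζ)x(ζ)) is continuously differentiable, the boundary condition W_B·(w(1), w(0)) = 0 holds, and set y := W_C·(w(1), w(0)) ∈ ℂⁿ. Then ⟨Ax, x⟩_X + ⟨x, Ax⟩_X = (1/2)·(0, y)* P (0, y) + Re ∫₀¹ w(ζ)* G₀ w(ζ) dζ, where (0, y) ∈ ℂ^{2n} denotes the vector whose first n entries are 0 and last n entries are y. -/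
/-! Since `H ζ` is Hermitian, `⟨Ax, x⟩_X` is the conjugate of `⟨x, Ax⟩_X = ½ ∫ w* (P₁ w′ + G₀ w)`,
so the left-hand side is `Re ∫ w* P₁ w′ + Re ∫ w* G₀ w`. As `P₁` is Hermitian, `2 Re (w* P₁ w′)` is
the derivative of `w* P₁ w`, which integrates to `w(1)* P₁ w(1) - w(0)* P₁ w(0)`. Finally
`R₀* Σ R₀ = diag(P₁, -P₁)` and `(0, y) = W_BC (w(1), w(0))`, so this boundary term is
`(0, y)* P (0, y)`. -/

open Matrix intervalIntegral
open scoped ComplexOrder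

/-- The energy inner product `⟨u,v⟩_X := (1/2)∫₀¹ u(ζ)* H(ζ) v(ζ) dζ`. -/
noncomputable def energyInner {n : ℕ} (H : ℝ → Matrix (Fin n) (Fin n) ℂ)
    (u v : ℝ → Fin n → ℂ) : ℂ :=
  (1 / 2 : ℂ) * ∫ ζ in (0 : ℝ)..1, star (u ζ) ⬝ᵥ ((H ζ) *ᵥ v ζ)

theorem Matrix.IsHermitian.star_star_dotProduct_mulVec {ι R : Type*} [Fintype ι] [CommRing R]
    [StarRing R] {M : Matrix ι ι R} (hM : M.IsHermitian) (u v : ι → R) :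
    star (star u ⬝ᵥ (M *ᵥ v)) = star v ⬝ᵥ (M *ᵥ u) := by
  rw [← star_dotProduct, star_mulVec, hM.eq, dotProduct_mulVec]

theorem star_mulVec_dotProduct_mulVec_mulVec {ι κ R : Type*} [Fintype ι] [Fintype κ]
    [CommSemiring R] [StarRing R] (A : Matrix ι κ R) (M : Matrix ι ι R) (v : κ → R) :
    star (A *ᵥ v) ⬝ᵥ (M *ᵥ (A *ᵥ v)) = star v ⬝ᵥ ((Aᴴ * M * A) *ᵥ v) := by
  rw [star_mulVec, ← dotProduct_mulVec, mulVec_mulVec, mulVec_mulVec, Matrix.mul_assoc]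

theorem Matrix.conjTranspose_mul_conjTranspose_inv_mul_mul_inv_mul {ι R : Type*} [Fintype ι]
    [DecidableEq ι] [CommRing R] [StarRing R] {W : Matrix ι ι R} (hW : IsUnit W)
    (M : Matrix ι ι R) : Wᴴ * ((W⁻¹)ᴴ * M * W⁻¹) * W = M := by
  have h : W⁻¹ * W = 1 := W.nonsing_inv_mul ((isUnit_iff_isUnit_det W).1 hW)
  calc Wᴴ * ((W⁻¹)ᴴ * M * W⁻¹) * W = (W⁻¹ * W)ᴴ * M * (W⁻¹ * W) := by
        simp only [conjTranspose_mul, Matrix.mul_assoc]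
    _ = M := by rw [h, conjTranspose_one, Matrix.one_mul, Matrix.mul_one]

theorem star_sumElim_dotProduct_fromBlocks_diag_mulVec {ι κ R : Type*} [Fintype ι] [Fintype κ]
    [CommSemiring R] [StarRing R] (A : Matrix ι ι R) (D : Matrix κ κ R) (a : ι → R) (b : κ → R) :
    star (Sum.elim a b) ⬝ᵥ (fromBlocks A 0 0 D *ᵥ Sum.elim a b) =
      star a ⬝ᵥ (A *ᵥ a) + star b ⬝ᵥ (D *ᵥ b) := by
  simp [Function.star_sumElim, fromBlocks_mulVec, dotProduct_block]

theorem conjTranspose_mul_swap_mul_eq_fromBlocks_diag {m : Type*} [Fintype m] [DecidableEq m]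
    {P₁ : Matrix m m ℂ} (hP₁ : P₁.IsHermitian) :
    ((Real.sqrt 2 : ℂ)⁻¹ • fromBlocks P₁ (-P₁) 1 1)ᴴ * fromBlocks 0 1 1 0 *
        ((Real.sqrt 2 : ℂ)⁻¹ • fromBlocks P₁ (-P₁) 1 1) = fromBlocks P₁ 0 0 (-P₁) := by
  have hc : star ((Real.sqrt 2 : ℂ)⁻¹) * (Real.sqrt 2 : ℂ)⁻¹ = 2⁻¹ := by
    rw [star_inv₀, Complex.star_def, Complex.conj_ofReal, ← mul_inv, ← Complex.ofReal_mul,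
      Real.mul_self_sqrt zero_le_two, Complex.ofReal_ofNat]
  rw [conjTranspose_smul, smul_mul, smul_mul, Matrix.mul_smul, smul_smul, hc,
    fromBlocks_conjTranspose, fromBlocks_multiply, fromBlocks_multiply]
  simp only [hP₁.eq, conjTranspose_one, conjTranspose_neg, Matrix.mul_one, Matrix.one_mul,
    Matrix.mul_zero, zero_add, add_zero, Matrix.mul_neg, add_neg_cancel, neg_add_cancel,
    fromBlocks_smul, smul_zero]
  congr 1 <;> module

section Continuity

variable {X ι ι' R : Type*} [TopologicalSpace X] [Fintype ι] {s : Set X}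
  [TopologicalSpace R] [NonUnitalNonAssocSemiring R] [ContinuousAdd R] [ContinuousMul R]

theorem ContinuousOn.dotProduct {f g : X → ι → R} (hf : ContinuousOn f s)
    (hg : ContinuousOn g s) : ContinuousOn (fun x => f x ⬝ᵥ g x) s :=
  (continuous_fst.dotProduct continuous_snd).comp_continuousOn (hf.prodMk hg)

theorem ContinuousOn.const_mulVec (M : Matrix ι' ι R) {f : X → ι → R}
    (hf : ContinuousOn f s) : ContinuousOn (fun x => M *ᵥ f x) s :=
  (continuous_const.matrix_mulVec continuous_id).comp_continuousOn hf

end Continuity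

section Derivative

variable {ι ι' 𝕜 𝔸 : Type*} [Fintype ι] [NontriviallyNormedField 𝕜] [NormedCommRing 𝔸]
  [NormedAlgebra 𝕜 𝔸] {u v : 𝕜 → ι → 𝔸} {u' v' : ι → 𝔸} {s : Set 𝕜} {t : 𝕜}

theorem HasDerivWithinAt.dotProduct (hu : HasDerivWithinAt u u' s t)
    (hv : HasDerivWithinAt v v' s t) :
    HasDerivWithinAt (fun t => u t ⬝ᵥ v t) (u' ⬝ᵥ v t + u t ⬝ᵥ v') s t := by
  have := HasDerivWithinAt.fun_sum (u := Finset.univ) fun i _ =>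
    (hasDerivWithinAt_pi.1 hu i).fun_mul (hasDerivWithinAt_pi.1 hv i)
  simpa only [_root_.dotProduct, Finset.sum_add_distrib] using this

theorem HasDerivWithinAt.const_mulVec (M : Matrix ι' ι 𝔸) (hv : HasDerivWithinAt v v' s t) :
    HasDerivWithinAt (fun t => M *ᵥ v t) (M *ᵥ v') s t :=
  hasDerivWithinAt_pi.2 fun i => HasDerivWithinAt.fun_sum fun j _ =>
    (hasDerivWithinAt_pi.1 hv j).const_mul (M i j)

end Derivative

theorem integral_star_dotProduct_mulVec_deriv_add_star {ι 𝕜 : Type*} [Fintype ι] [RCLike 𝕜]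
    {M : Matrix ι ι 𝕜} (hM : M.IsHermitian) {w w' : ℝ → ι → 𝕜} {a b : ℝ} (hab : a ≤ b)
    (hw : ∀ t ∈ Set.Icc a b, HasDerivWithinAt w (w' t) (Set.Icc a b) t)
    (hw' : ContinuousOn w' (Set.Icc a b)) :
    (∫ t in a..b, star (w t) ⬝ᵥ (M *ᵥ w' t)) + star (∫ t in a..b, star (w t) ⬝ᵥ (M *ᵥ w' t)) =
      star (w b) ⬝ᵥ (M *ᵥ w b) - star (w a) ⬝ᵥ (M *ᵥ w a) := by
  have hwc : ContinuousOn w (Set.Icc a b) := fun t ht => (hw t ht).continuousWithinAt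
  have hf : ContinuousOn (fun t => star (w t) ⬝ᵥ (M *ᵥ w' t)) (Set.Icc a b) :=
    hwc.star.dotProduct (hw'.const_mulVec M)
  have hstar : star (∫ t in a..b, star (w t) ⬝ᵥ (M *ᵥ w' t)) =
      ∫ t in a..b, star (star (w t) ⬝ᵥ (M *ᵥ w' t)) := by
    simp only [RCLike.star_def, intervalIntegral_conj]
  have hderiv : ∀ t ∈ Set.Icc a b, HasDerivWithinAt (fun t => star (w t) ⬝ᵥ (M *ᵥ w t))
      (star (w t) ⬝ᵥ (M *ᵥ w' t) + star (star (w t) ⬝ᵥ (M *ᵥ w' t))) (Set.Icc a b) t := by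
    intro t ht
    rw [hM.star_star_dotProduct_mulVec, add_comm]
    exact (hw t ht).star.dotProduct ((hw t ht).const_mulVec M)
  rw [hstar, ← integral_add (hf.intervalIntegrable_of_Icc hab)
    (hf.star.intervalIntegrable_of_Icc hab)]
  refine integral_eq_sub_of_hasDeriv_right_of_le hab (hwc.star.dotProduct (hwc.const_mulVec M))
    (fun t ht => ((hderiv t (Set.Ioo_subset_Icc_self ht)).hasDerivAt
      (Icc_mem_nhds ht.1 ht.2)).hasDerivWithinAt) ?_
  exact (hf.add hf.star).intervalIntegrable_of_Icc hab

theorem energyInner_swap {n : ℕ} {H : ℝ → Matrix (Fin n) (Fin n) ℂ}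
    (hH : ∀ ζ ∈ Set.Icc (0 : ℝ) 1, (H ζ).IsHermitian) (u v : ℝ → Fin n → ℂ) :
    energyInner H v u = star (energyInner H u v) := by
  unfold energyInner
  rw [star_mul', Complex.star_def, ← intervalIntegral_conj]
  congr 1
  · rw [one_div, map_inv₀, map_ofNat]
  · refine integral_congr fun ζ hζ => ?_
    rw [Set.uIcc_of_le zero_le_one] at hζ
    exact ((hH ζ hζ).star_star_dotProduct_mulVec _ _).symm

theorem energyInner_eq_integral_star_dotProduct {n : ℕ} {H : ℝ → Matrix (Fin n) (Fin n) ℂ}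
    (hH : ∀ ζ ∈ Set.Icc (0 : ℝ) 1, (H ζ).IsHermitian) {x w : ℝ → Fin n → ℂ}
    (hw : ∀ ζ ∈ Set.Icc (0 : ℝ) 1, w ζ = H ζ *ᵥ x ζ) (v : ℝ → Fin n → ℂ) :
    energyInner H x v = 1 / 2 * ∫ ζ in (0 : ℝ)..1, star (w ζ) ⬝ᵥ v ζ := by
  unfold energyInner
  congr 1
  refine integral_congr fun ζ hζ => ?_
  rw [Set.uIcc_of_le zero_le_one] at hζ
  rw [hw ζ hζ, star_mulVec, (hH ζ hζ).eq, dotProduct_mulVec]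

theorem energy_balance_general
    (n : ℕ)
    (P₁ : Matrix (Fin n) (Fin n) ℂ) (hP₁herm : P₁.IsHermitian)
    (G₀ : Matrix (Fin n) (Fin n) ℂ)
    (H : ℝ → Matrix (Fin n) (Fin n) ℂ)
    (hHherm : ∀ ζ ∈ Set.Icc (0 : ℝ) 1, (H ζ).IsHermitian)
    (W_B W_C : Matrix (Fin n) (Fin n ⊕ Fin n) ℂ)
    (W_BC : Matrix (Fin n ⊕ Fin n) (Fin n ⊕ Fin n) ℂ)
    (hW_BC : W_BC = Matrix.fromRows W_B W_C)
    (hW_BCinv : IsUnit W_BC)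
    (R₀ : Matrix (Fin n ⊕ Fin n) (Fin n ⊕ Fin n) ℂ)
    (hR₀ : R₀ = ((Real.sqrt 2 : ℂ))⁻¹ • Matrix.fromBlocks P₁ (-P₁) 1 1)
    (Sig : Matrix (Fin n ⊕ Fin n) (Fin n ⊕ Fin n) ℂ)
    (hSig : Sig = Matrix.fromBlocks 0 1 1 0)
    (P : Matrix (Fin n ⊕ Fin n) (Fin n ⊕ Fin n) ℂ)
    (hP : P = (W_BC⁻¹)ᴴ * R₀ᴴ * Sig * R₀ * W_BC⁻¹)
    (x w w' : ℝ → Fin n → ℂ)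
    (hw : ∀ ζ ∈ Set.Icc (0 : ℝ) 1, w ζ = (H ζ) *ᵥ x ζ)
    (hw' : ∀ ζ ∈ Set.Icc (0 : ℝ) 1, HasDerivWithinAt w (w' ζ) (Set.Icc 0 1) ζ)
    (hw'cont : ContinuousOn w' (Set.Icc 0 1))
    (hbdry : W_B *ᵥ Sum.elim (w 1) (w 0) = 0)
    (y : Fin n → ℂ)
    (hy : y = W_C *ᵥ Sum.elim (w 1) (w 0))
    (Ax : ℝ → Fin n → ℂ)
    (hAx : ∀ ζ, Ax ζ = P₁ *ᵥ w' ζ + G₀ *ᵥ w ζ) :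
    energyInner H Ax x + energyInner H x Ax =
      (1 / 2 : ℂ) * (star (Sum.elim (0 : Fin n → ℂ) y) ⬝ᵥ (P *ᵥ Sum.elim (0 : Fin n → ℂ) y))
        + ((∫ ζ in (0 : ℝ)..1, star (w ζ) ⬝ᵥ (G₀ *ᵥ w ζ)).re : ℂ) := by
  have hboundary : star (Sum.elim (0 : Fin n → ℂ) y) ⬝ᵥ (P *ᵥ Sum.elim 0 y) =
      star (w 1) ⬝ᵥ (P₁ *ᵥ w 1) - star (w 0) ⬝ᵥ (P₁ *ᵥ w 0) := by
    have hW : W_BC *ᵥ Sum.elim (w 1) (w 0) = Sum.elim (0 : Fin n → ℂ) y := by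
      rw [hW_BC, fromRows_mulVec, hbdry, hy]
    have hP' : P = (W_BC⁻¹)ᴴ * (R₀ᴴ * Sig * R₀) * W_BC⁻¹ := by
      simp only [hP, Matrix.mul_assoc]
    rw [← hW, star_mulVec_dotProduct_mulVec_mulVec, hP',
      conjTranspose_mul_conjTranspose_inv_mul_mul_inv_mul hW_BCinv, hR₀, hSig,
      conjTranspose_mul_swap_mul_eq_fromBlocks_diag hP₁herm,
      star_sumElim_dotProduct_fromBlocks_diag_mulVec, neg_mulVec, dotProduct_neg, sub_eq_add_neg]
  have hwc : ContinuousOn w (Set.Icc 0 1) := fun ζ hζ => (hw' ζ hζ).continuousWithinAt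
  have hsplit : energyInner H x Ax = 1 / 2 * ((∫ ζ in (0 : ℝ)..1, star (w ζ) ⬝ᵥ (P₁ *ᵥ w' ζ)) +
      ∫ ζ in (0 : ℝ)..1, star (w ζ) ⬝ᵥ (G₀ *ᵥ w ζ)) := by
    rw [energyInner_eq_integral_star_dotProduct hHherm hw, ← integral_add
      ((hwc.star.dotProduct (hw'cont.const_mulVec P₁)).intervalIntegrable_of_Icc zero_le_one)
      ((hwc.star.dotProduct (hwc.const_mulVec G₀)).intervalIntegrable_of_Icc zero_le_one)]
    simp only [hAx, dotProduct_add]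
  rw [energyInner_swap hHherm, hsplit, hboundary,
    ← integral_star_dotProduct_mulVec_deriv_add_star hP₁herm zero_le_one hw' hw'cont]
  apply Complex.ext <;> simp <;> ring

/-- Energy balance, Lemma 4.1: if `w := H·x` is continuously differentiable,
`W_B (w(1), w(0)) = 0` and `y := W_C (w(1), w(0))`, then, with `(Ax)(ζ) = P₁w′(ζ) + G₀w(ζ)`,
`⟨Ax, x⟩_X + ⟨x, Ax⟩_X = (1/2)(0,y)* P (0,y) + Re ∫₀¹ w(ζ)* G₀ w(ζ) dζ`. -/
theorem energy_balance
    (n : ℕ) (hn : 0 < n)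
    (P₁ : Matrix (Fin n) (Fin n) ℂ) (hP₁herm : P₁.IsHermitian) (hP₁inv : IsUnit P₁)
    (G₀ : Matrix (Fin n) (Fin n) ℂ)
    (H : ℝ → Matrix (Fin n) (Fin n) ℂ)
    (hHcont : ∀ i j, ContinuousOn (fun ζ => H ζ i j) (Set.Icc 0 1))
    (hHherm : ∀ ζ ∈ Set.Icc (0 : ℝ) 1, (H ζ).IsHermitian)
    (hHpos : ∀ ζ ∈ Set.Icc (0 : ℝ) 1, (H ζ).PosDef)
    (W_B W_C : Matrix (Fin n) (Fin n ⊕ Fin n) ℂ)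
    (W_BC : Matrix (Fin n ⊕ Fin n) (Fin n ⊕ Fin n) ℂ)
    (hW_BC : W_BC = Matrix.fromRows W_B W_C)
    (hW_BCinv : IsUnit W_BC)
    (R₀ : Matrix (Fin n ⊕ Fin n) (Fin n ⊕ Fin n) ℂ)
    (hR₀ : R₀ = ((Real.sqrt 2 : ℂ))⁻¹ • Matrix.fromBlocks P₁ (-P₁) 1 1)
    (Sig : Matrix (Fin n ⊕ Fin n) (Fin n ⊕ Fin n) ℂ)
    (hSig : Sig = Matrix.fromBlocks 0 1 1 0)
    (P : Matrix (Fin n ⊕ Fin n) (Fin n ⊕ Fin n) ℂ)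
    (hP : P = (W_BC⁻¹)ᴴ * R₀ᴴ * Sig * R₀ * W_BC⁻¹)
    (x w w' : ℝ → Fin n → ℂ)
    (hw : ∀ ζ ∈ Set.Icc (0 : ℝ) 1, w ζ = (H ζ) *ᵥ x ζ)
    (hw' : ∀ ζ ∈ Set.Icc (0 : ℝ) 1, HasDerivWithinAt w (w' ζ) (Set.Icc 0 1) ζ)
    (hw'cont : ContinuousOn w' (Set.Icc 0 1))
    (hbdry : W_B *ᵥ Sum.elim (w 1) (w 0) = 0)
    (y : Fin n → ℂ)
    (hy : y = W_C *ᵥ Sum.elim (w 1) (w 0))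
    (Ax : ℝ → Fin n → ℂ)
    (hAx : ∀ ζ, Ax ζ = P₁ *ᵥ w' ζ + G₀ *ᵥ w ζ) :
    energyInner H Ax x + energyInner H x Ax =
      (1 / 2 : ℂ) * (star (Sum.elim (0 : Fin n → ℂ) y) ⬝ᵥ (P *ᵥ Sum.elim (0 : Fin n → ℂ) y))
        + ((∫ ζ in (0 : ℝ)..1, star (w ζ) ⬝ᵥ (G₀ *ᵥ w ζ)).re : ℂ) :=
  energy_balance_general n P₁ hP₁herm G₀ H hHherm W_B W_C W_BC hW_BC hW_BCinv R₀ hR₀ Sig hSig P hP x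
    w w' hw hw' hw'cont hbdry y hy Ax hAx
end

section
/- (Lemma 5.1: Hautus-type estimate on a left half-plane under a bounded perturbation.) Suppose there exists δ > 0 such that Re⟨x, Lx⟩ ≥ δ‖x‖² for all x ∈ X, and suppose the Lyapunov equation ⟨Ax, Lx⟩ + ⟨Lx, Ax⟩ = −‖Cx‖² holds for all x ∈ D. Let G : X → X be a bounded linear operator. Then there exist constants m > 0 and α > 0 such that for every s ∈ ℂ with Re s < −α and every x ∈ D: ‖s·x − Ax − Gx‖² + |Re s|·‖Cx‖² ≥ m·(Re s)²·‖x‖². -/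
/-!
Write `v = s x - A x - G x` and pair it with `L x`. Since `⟪x, L x⟫` is real, taking real parts
and inserting the Lyapunov equation gives
`‖C x‖² = 2 |Re s| Re⟪x, L x⟫ + 2 Re⟪G x, L x⟫ + 2 Re⟪v, L x⟫`.
Coercivity bounds the first term below by `2 |Re s| δ ‖x‖²`; for `|Re s| ≥ 2‖G‖‖L‖/δ` this absorbs
the `G`-term, leaving `|Re s| δ ‖x‖² ≤ ‖C x‖² + 2‖L‖‖v‖‖x‖`. Multiplying by `|Re s|` and splitting
the last term by AM-GM gives the estimate with `m = δ² / (2 max(δ, 2‖L‖²))`.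
-/

open scoped InnerProductSpace
open RCLike

section

variable {𝕜 E F : Type*} [RCLike 𝕜] [NormedAddCommGroup E] [InnerProductSpace 𝕜 E]
  [NormedAddCommGroup F] [InnerProductSpace 𝕜 F]

theorem ContinuousLinearMap.abs_re_inner_apply_le (T : E →L[𝕜] F) (y : F) (x : E) :
    |re ⟪y, T x⟫_𝕜| ≤ ‖T‖ * ‖y‖ * ‖x‖ :=
  calc |re ⟪y, T x⟫_𝕜| ≤ ‖y‖ * ‖T x‖ := (abs_re_le_norm _).trans (norm_inner_le_norm _ _)
    _ ≤ ‖y‖ * (‖T‖ * ‖x‖) := by gcongr; exact T.le_opNorm x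
    _ = ‖T‖ * ‖y‖ * ‖x‖ := by ring

theorem LinearMap.IsSymmetric.re_inner_smul_left_apply {T : E →ₗ[𝕜] E} (hT : T.IsSymmetric)
    (s : 𝕜) (x : E) : re ⟪s • x, T x⟫_𝕜 = re s * re ⟪x, T x⟫_𝕜 := by
  simp [inner_smul_left, hT.im_inner_self_apply x]

theorem coercive_resolvent_estimate {L G : E →L[𝕜] E} (hL : (L : E →ₗ[𝕜] E).IsSymmetric)
    {δ : ℝ} {x : E} (hcoer : δ * ‖x‖ ^ 2 ≤ re ⟪x, L x⟫_𝕜) {s : 𝕜} (hs : re s ≤ 0) (a : E) :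
    -re s * δ * ‖x‖ ^ 2 ≤
      -re ⟪a, L x⟫_𝕜 + ‖G‖ * ‖L‖ * ‖x‖ ^ 2 + ‖L‖ * ‖s • x - a - G x‖ * ‖x‖ := by
  have hsplit : re ⟪s • x - a - G x, L x⟫_𝕜
      = re s * re ⟪x, L x⟫_𝕜 - re ⟪a, L x⟫_𝕜 - re ⟪G x, L x⟫_𝕜 := by
    have hsx := hL.re_inner_smul_left_apply s x
    rw [ContinuousLinearMap.coe_coe] at hsx
    rw [inner_sub_left, inner_sub_left, map_sub, map_sub, hsx]
  have hG : |re ⟪G x, L x⟫_𝕜| ≤ ‖G‖ * ‖L‖ * ‖x‖ ^ 2 :=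
    calc |re ⟪G x, L x⟫_𝕜| ≤ ‖L‖ * ‖G x‖ * ‖x‖ := L.abs_re_inner_apply_le _ _
      _ ≤ ‖L‖ * (‖G‖ * ‖x‖) * ‖x‖ := by gcongr; exact G.le_opNorm x
      _ = ‖G‖ * ‖L‖ * ‖x‖ ^ 2 := by ring
  have hv := L.abs_re_inner_apply_le (s • x - a - G x) x
  have hq : -re s * (δ * ‖x‖ ^ 2) ≤ -re s * re ⟪x, L x⟫_𝕜 := by gcongr; linarith
  linarith [(abs_le.1 hG).1, (abs_le.1 hv).1]

end

theorem hautus_scalar_bound {δ σ ℓ n w c : ℝ} (hδ : 0 < δ) (hσ : 0 ≤ σ) (hc : 0 ≤ c)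
    (h : σ * δ * n ^ 2 ≤ c + 2 * ℓ * w * n) :
    δ ^ 2 / (2 * max δ (2 * ℓ ^ 2)) * σ ^ 2 * n ^ 2 ≤ w ^ 2 + σ * c := by
  set κ := max δ (2 * ℓ ^ 2)
  have hmul : δ * σ * (σ * δ * n ^ 2) ≤ δ * σ * (c + 2 * ℓ * w * n) := by gcongr
  -- AM-GM: `2 δ σ ℓ w n ≤ δ² σ² n² / 2 + 2 ℓ² w²`
  have hamgm : 0 ≤ (δ * σ * n - 2 * ℓ * w) ^ 2 := sq_nonneg _
  have hδκ : δ * (σ * c) ≤ κ * (σ * c) := by gcongr; exact le_max_left _ _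
  have hℓκ : 2 * ℓ ^ 2 * w ^ 2 ≤ κ * w ^ 2 := by gcongr; exact le_max_right _ _
  rw [div_mul_eq_mul_div, div_mul_eq_mul_div, div_le_iff₀ (by positivity)]
  nlinarith

theorem hautus_left_half_plane_general
    {X Y : Type*} [NormedAddCommGroup X] [InnerProductSpace ℂ X] [CompleteSpace X]
    [NormedAddCommGroup Y] [InnerProductSpace ℂ Y]
    (D : Submodule ℂ X) (A : D →ₗ[ℂ] X) (C : D →ₗ[ℂ] Y)
    (L : X →L[ℂ] X) (hL : IsSelfAdjoint L)
    (δ : ℝ) (hδ : 0 < δ)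
    (hcoer : ∀ x : X, δ * ‖x‖ ^ 2 ≤ (inner ℂ x (L x) : ℂ).re)
    (hlyap : ∀ x : D, (inner ℂ (A x) (L (x : X)) : ℂ) + (inner ℂ (L (x : X)) (A x) : ℂ)
      = -(‖C x‖ ^ 2 : ℂ))
    (G : X →L[ℂ] X) :
    ∃ m > (0 : ℝ), ∃ α > (0 : ℝ), ∀ s : ℂ, s.re < -α → ∀ x : D,
      m * s.re ^ 2 * ‖(x : X)‖ ^ 2 ≤
        ‖s • (x : X) - A x - G (x : X)‖ ^ 2 + |s.re| * ‖C x‖ ^ 2 := by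
  refine ⟨δ ^ 2 / (2 * max δ (2 * ‖L‖ ^ 2)), by positivity, 2 * ‖G‖ * ‖L‖ / δ + 1,
    by positivity, fun s hs x => ?_⟩
  have hα : 0 ≤ 2 * ‖G‖ * ‖L‖ / δ := by positivity
  have hσ : 2 * ‖G‖ * ‖L‖ ≤ -s.re * δ := by
    rw [← div_le_iff₀ hδ]; linarith
  have hC : -(2 * (inner ℂ (A x) (L x) : ℂ).re) = ‖C x‖ ^ 2 := by
    have h := congrArg Complex.re (hlyap x)
    rw [Complex.add_re, ← inner_conj_symm (L (x : X)) (A x), Complex.conj_re] at h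
    norm_cast at h
    linarith
  have hs0 : s.re < 0 := by linarith
  have henergy := coercive_resolvent_estimate (G := G) (s := s) hL.isSymmetric (hcoer x)
    hs0.le (A x)
  simp only [RCLike.re_to_complex] at henergy
  have hGL : 2 * ‖G‖ * ‖L‖ * ‖(x : X)‖ ^ 2 ≤ -s.re * δ * ‖(x : X)‖ ^ 2 := by gcongr
  rw [abs_of_neg hs0, ← neg_sq s.re]
  exact hautus_scalar_bound hδ (by linarith) (sq_nonneg _) (by linarith)

/-- Lemma 5.1: Hautus-type estimate on a left half-plane under a bounded
perturbation. If `L` is a bounded self-adjoint operator which is coercive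
(`Re⟨x, Lx⟩ ≥ δ‖x‖²`) and satisfies the Lyapunov equation
`⟨Ax, Lx⟩ + ⟨Lx, Ax⟩ = −‖Cx‖²` on `D`, and `G` is a bounded operator, then there exist
`m > 0` and `α > 0` such that for all `s` with `Re s < −α` and all `x ∈ D`:
`‖s·x − Ax − Gx‖² + |Re s|·‖Cx‖² ≥ m·(Re s)²·‖x‖²`. -/
theorem hautus_left_half_plane
    {X Y : Type*} [NormedAddCommGroup X] [InnerProductSpace ℂ X] [CompleteSpace X]
    [NormedAddCommGroup Y] [InnerProductSpace ℂ Y] [CompleteSpace Y]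
    (D : Submodule ℂ X) (A : D →ₗ[ℂ] X) (C : D →ₗ[ℂ] Y)
    (L : X →L[ℂ] X) (hL : IsSelfAdjoint L)
    (δ : ℝ) (hδ : 0 < δ)
    (hcoer : ∀ x : X, δ * ‖x‖ ^ 2 ≤ (inner ℂ x (L x) : ℂ).re)
    (hlyap : ∀ x : D, (inner ℂ (A x) (L (x : X)) : ℂ) + (inner ℂ (L (x : X)) (A x) : ℂ)
      = -(‖C x‖ ^ 2 : ℂ))
    (G : X →L[ℂ] X) :
    ∃ m > (0 : ℝ), ∃ α > (0 : ℝ), ∀ s : ℂ, s.re < -α → ∀ x : D,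
      m * s.re ^ 2 * ‖(x : X)‖ ^ 2 ≤
        ‖s • (x : X) - A x - G (x : X)‖ ^ 2 + |s.re| * ‖C x‖ ^ 2 :=
  hautus_left_half_plane_general D A C L hL δ hδ hcoer hlyap G
end

section
/- (Proposition 2.3, implication 3) ⇒ 1), trajectory version: a coercive Lyapunov inequality yields the infinite-time observability estimate.) Suppose there exists δ > 0 such that Re⟨x, Lx⟩ ≥ δ‖x‖² for all x ∈ X, and suppose the Lyapunov inequality Re(⟨Ax, Lx⟩ + ⟨Lx, Ax⟩) ≥ −‖Cx‖² holds for all x ∈ D. Let x : [0,∞) → X be differentiable with x(t) ∈ D and x′(t) = A(x(t)) for every t ≥ 0, suppose ‖x(t)‖ → 0 as t → ∞, and suppose t ↦ ‖C x(t)‖² is continuous and integrable on [0,∞). Then ∫₀^∞ ‖C x(t)‖² dt ≥ δ‖x(0)‖². -/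
/-!
The Lyapunov functional `V t = re ⟪x t, L (x t)⟫` has derivative
`re (⟪A x, L x⟫ + ⟪L x, A x⟫) ≥ -‖C x‖²` along the trajectory, so `V 0 - V T ≤ ∫₀ᵀ ‖C x‖²`.
Letting `T → ∞`, `V T → 0` and `V 0 ≤ ∫₀^∞ ‖C x‖²`; coercivity of `L` bounds `V 0` below by
`δ ‖x 0‖²`.
-/

open MeasureTheory Filter Set Topology RCLike InnerProductSpace

theorem sub_le_integral_Ioi_of_hasDeriv_right_of_le {f f' φ : ℝ → ℝ} {a m : ℝ}
    (hcont : ContinuousOn f (Ici a)) (hderiv : ∀ t ∈ Ioi a, HasDerivWithinAt f (f' t) (Ioi t) t)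
    (hf : Tendsto f atTop (𝓝 m)) (φint : IntegrableOn φ (Ioi a))
    (hφf : ∀ t ∈ Ioi a, f' t ≤ φ t) : m - f a ≤ ∫ t in Ioi a, φ t := by
  have hint (b : ℝ) (hab : a ≤ b) : f b - f a ≤ ∫ t in a..b, φ t :=
    intervalIntegral.sub_le_integral_of_hasDeriv_right_of_le hab (hcont.mono Icc_subset_Ici_self)
      (fun t ht => hderiv t ht.1)
      (((integrableOn_Ici_iff_integrableOn_Ioi (f := φ)).mpr φint).mono_set Icc_subset_Ici_self)
      (fun t ht => hφf t ht.1)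
  exact le_of_tendsto_of_tendsto (hf.sub_const _)
    (intervalIntegral_tendsto_integral_Ioi a φint tendsto_id) ((eventually_ge_atTop a).mono hint)

section
variable {𝕜 E : Type*} [RCLike 𝕜] [NormedAddCommGroup E] [InnerProductSpace 𝕜 E]

theorem tendsto_re_inner_apply_self_zero (L : E →L[𝕜] E) {α : Type*} {l : Filter α} {x : α → E}
    (hx : Tendsto (fun t => ‖x t‖) l (𝓝 0)) :
    Tendsto (fun t => re ⟪x t, L (x t)⟫_𝕜) l (𝓝 0) := by
  have hcont : Continuous fun v : E => re ⟪v, L v⟫_𝕜 := by fun_prop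
  simpa [Function.comp_def] using (hcont.tendsto 0).comp (tendsto_zero_iff_norm_tendsto_zero.mpr hx)

theorem LinearMap.IsSymmetric.hasDerivWithinAt_re_inner_apply_self [NormedSpace ℝ E]
    [IsScalarTower ℝ 𝕜 E] {L : E →L[𝕜] E} (hL : (L : E →ₗ[𝕜] E).IsSymmetric) {x : ℝ → E} {x' : E}
    {s : Set ℝ} {t : ℝ} (hx : HasDerivWithinAt x x' s t) :
    HasDerivWithinAt (fun t => re ⟪x t, L (x t)⟫_𝕜)
      (re (⟪x', L (x t)⟫_𝕜 + ⟪L (x t), x'⟫_𝕜)) s t := by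
  have hLx : HasDerivWithinAt (fun t => L (x t)) (L x') s t :=
    (L.restrictScalars ℝ).hasFDerivAt.comp_hasDerivWithinAt t hx
  have hinner := reCLM.hasFDerivAt.comp_hasDerivWithinAt t (hx.inner 𝕜 hLx)
  have hsymm : ⟪x t, L x'⟫_𝕜 = ⟪L (x t), x'⟫_𝕜 := (hL (x t) x').symm
  rwa [hsymm, add_comm] at hinner
end

theorem lyapunov_ineq_implies_infinite_time_observability_general
    {X Y : Type*} [NormedAddCommGroup X] [InnerProductSpace ℂ X] [CompleteSpace X]
    [NormedAddCommGroup Y] [InnerProductSpace ℂ Y]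
    (D : Submodule ℂ X) (A : D →ₗ[ℂ] X) (C : D →ₗ[ℂ] Y)
    (L : X →L[ℂ] X) (hL : IsSelfAdjoint L)
    (δ : ℝ)
    (hcoer : ∀ x : X, δ * ‖x‖ ^ 2 ≤ (inner ℂ x (L x) : ℂ).re)
    (hlyap : ∀ x : D, -(‖C x‖ ^ 2) ≤
      ((inner ℂ (A x) (L (x : X)) : ℂ) + (inner ℂ (L (x : X)) (A x) : ℂ)).re)
    (x : ℝ → X) (hxD : ∀ t, 0 ≤ t → x t ∈ D)
    (hx' : ∀ t, ∀ ht : 0 ≤ t, HasDerivWithinAt x (A ⟨x t, hxD t ht⟩) (Set.Ici 0) t)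
    (hxdecay : Tendsto (fun t => ‖x t‖) atTop (nhds 0))
    (g : ℝ → ℝ) (hg : ∀ t, ∀ ht : 0 ≤ t, g t = ‖C ⟨x t, hxD t ht⟩‖ ^ 2)
    (hgint : IntegrableOn g (Set.Ici 0)) :
    δ * ‖x 0‖ ^ 2 ≤ ∫ t in Set.Ici (0 : ℝ), g t := by
  set V : ℝ → ℝ := fun t => re ⟪x t, L (x t)⟫_ℂ
  have hV (t : ℝ) (ht : 0 ≤ t) :=
    hL.isSymmetric.hasDerivWithinAt_re_inner_apply_self (hx' t ht)
  have hV_right (t : ℝ) (ht : 0 < t) := (hV t ht.le).mono (Ioi_subset_Ici ht.le)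
  -- The derivative of `V` depends on a membership proof, so it is passed as a `derivWithin`.
  have hV_le : 0 - (-V) 0 ≤ ∫ t in Ioi 0, g t := by
    refine sub_le_integral_Ioi_of_hasDeriv_right_of_le
      (f' := fun t => derivWithin (-V) (Ioi t) t)
      (fun t ht => (hV t ht).neg.continuousWithinAt)
      (fun t ht => (hV_right t ht).neg.differentiableWithinAt.hasDerivWithinAt)
      (neg_zero (G := ℝ) ▸ (tendsto_re_inner_apply_self_zero L hxdecay).neg)
      (hgint.mono_set Ioi_subset_Ici_self) (fun t ht => ?_)
    rw [(hV_right t ht).neg.derivWithin (uniqueDiffWithinAt_Ioi t), hg t ht.le, neg_le]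
    exact hlyap _
  calc δ * ‖x 0‖ ^ 2 ≤ V 0 := hcoer (x 0)
    _ ≤ ∫ t in Ioi 0, g t := by simpa using hV_le
    _ = ∫ t in Ici 0, g t := integral_Ici_eq_integral_Ioi.symm

/-- STATEMENT 6 (Proposition 2.3, implication 3) ⇒ 1), trajectory version): a coercive
Lyapunov inequality yields the infinite-time observability estimate
`∫₀^∞ ‖C x(t)‖² dt ≥ δ‖x(0)‖²` along any trajectory `x′(t) = A x(t)` with `‖x(t)‖ → 0`. -/
theorem lyapunov_ineq_implies_infinite_time_observability
    {X Y : Type*} [NormedAddCommGroup X] [InnerProductSpace ℂ X] [CompleteSpace X]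
    [NormedAddCommGroup Y] [InnerProductSpace ℂ Y] [CompleteSpace Y]
    (D : Submodule ℂ X) (A : D →ₗ[ℂ] X) (C : D →ₗ[ℂ] Y)
    (L : X →L[ℂ] X) (hL : IsSelfAdjoint L)
    (δ : ℝ) (hδ : 0 < δ)
    (hcoer : ∀ x : X, δ * ‖x‖ ^ 2 ≤ (inner ℂ x (L x) : ℂ).re)
    (hlyap : ∀ x : D, -(‖C x‖ ^ 2) ≤
      ((inner ℂ (A x) (L (x : X)) : ℂ) + (inner ℂ (L (x : X)) (A x) : ℂ)).re)
    (x : ℝ → X) (hxD : ∀ t, 0 ≤ t → x t ∈ D)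
    (hx' : ∀ t, ∀ ht : 0 ≤ t, HasDerivWithinAt x (A ⟨x t, hxD t ht⟩) (Set.Ici 0) t)
    (hxdecay : Tendsto (fun t => ‖x t‖) atTop (nhds 0))
    (g : ℝ → ℝ) (hg : ∀ t, ∀ ht : 0 ≤ t, g t = ‖C ⟨x t, hxD t ht⟩‖ ^ 2)
    (hgcont : ContinuousOn g (Set.Ici 0))
    (hgint : IntegrableOn g (Set.Ici 0)) :
    δ * ‖x 0‖ ^ 2 ≤ ∫ t in Set.Ici (0 : ℝ), g t :=
  lyapunov_ineq_implies_infinite_time_observability_general D A C L hL δ hcoer hlyap x hxD hx'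
    hxdecay g hg hgint
end

section
/- (Example, part 2: observability can be lost under a dissipative perturbation.) Let A := [[−1, 1],[−1, 0]] ∈ ℂ^{2×2}, C := [√2, 0] ∈ ℂ^{1×2}, and G₀ := [[−1, −1],[−1, −1]] ∈ ℂ^{2×2}. Then: (i) every element of the spectrum of A + G₀ (as a matrix over ℂ) has strictly negative real part, i.e., A + G₀ is Hurwitz; (ii) the pair (C, A + G₀) is not observable: there exists v ∈ ℂ² with v ≠ 0 such that C·(A + G₀)^k·v = 0 for all k ∈ ℕ. -/
open Matrix

/-- Example, part 2: with `A = [[−1,1],[−1,0]]`, `C = [√2, 0]` and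
`G₀ = [[−1,−1],[−1,−1]]`: (i) `A + G₀` is Hurwitz; (ii) `(C, A + G₀)` is not observable. -/
theorem example_part2 :
    let A : Matrix (Fin 2) (Fin 2) ℂ := !![-1, 1; -1, 0]
    let C : Matrix (Fin 1) (Fin 2) ℂ := !![(Real.sqrt 2 : ℂ), 0]
    let G₀ : Matrix (Fin 2) (Fin 2) ℂ := !![-1, -1; -1, -1]
    (∀ μ ∈ spectrum ℂ (A + G₀), μ.re < 0) ∧
    (∃ v : Fin 2 → ℂ, v ≠ 0 ∧ ∀ k : ℕ, C *ᵥ (((A + G₀) ^ k) *ᵥ v) = 0) := by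
  intro A C G₀
  have hM : A + G₀ = !![-2, 0; -2, -1] := by
    ext i j
    fin_cases i <;> fin_cases j <;> simp [A, G₀] <;> norm_num
  constructor
  · intro μ hμ
    rw [spectrum.mem_iff, Matrix.isUnit_iff_isUnit_det, isUnit_iff_ne_zero, not_not] at hμ
    rw [hM] at hμ
    have : (μ + 2) * (μ + 1) = 0 := by
      rw [← hμ, Matrix.det_fin_two]
      simp [Algebra.algebraMap_eq_smul_one, Matrix.smul_apply, Matrix.one_apply]
      try ring
    rcases mul_eq_zero.mp this with h | h
    · have : μ = -2 := by linear_combination h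
      simp [this]
    · have : μ = -1 := by linear_combination h
      simp [this]
  · refine ⟨![0, 1], ?_, ?_⟩
    · intro h
      have := congrFun h 1
      simp at this
    · intro k
      have key : ∀ k : ℕ, ∃ c : ℂ, ((A + G₀) ^ k) *ᵥ ![0, 1] = ![0, c] := by
        intro k
        induction k with
        | zero => exact ⟨1, by simp⟩
        | succ n ih =>
          obtain ⟨c, hc⟩ := ih
          refine ⟨-c, ?_⟩
          rw [pow_succ', ← Matrix.mulVec_mulVec, hc, hM]
          ext i
          fin_cases i <;> simp [Matrix.mulVec, dotProduct, Fin.sum_univ_two]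
      obtain ⟨c, hc⟩ := key k
      rw [hc]
      ext i
      fin_cases i
      simp [C, Matrix.mulVec, dotProduct, Fin.sum_univ_two]
end
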